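/- Let 0 < α < 1/2. Let u₀ : ℝ → ℝ be C¹ and 2π-periodic, and suppose there exist points x₁ < x₂ with u₀(x₁) > u₀(x₂) > 0. Then there exists λ₀ > 0 such that for every λ ∈ (0, λ₀) there is no global C¹ solution u : [1,∞) × ℝ → ℝ of the dust equation, 2π-periodic in x, with initial data u(1,·) = λ·u₀. Consequently, the quiet dust solution u ≡ 0 is unstable: there is a sequence of arbitrarily small C¹ initial data whose solutions develop singularities in finite time. -/

import Mathlib

/-!
A `C¹` solution is constant times `t^{-2α}` along characteristics: if `x(t)` is the explicit curve
with speed `dustSpeed (t^{2α}) (c t^{-2α})`, `c = u(1, x₀)`, then `w(t) = u(t, x(t)) - c t^{-2α}`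
satisfies `|w'| ≤ (sup |∂ₓu| + 2α) |w|` with `w(1) = 0`, so `w ≡ 0` by Grönwall. Starting from
`x₁ < x₂` with `c₁ = λ u₀(x₁) > c₂ = λ u₀(x₂) > 0`, the two characteristics have speeds differing
by at least a constant times `t^{-2α}`, which is not integrable on `[1, ∞)` since `2α < 1`. Hence
they meet at some time `T`, where `u` would equal both `c₁ T^{-2α}` and `c₂ T^{-2α}`.
-/

/-- The dust equation `∂ₜu + (√(t^{2α}u² + 1))⁻¹·u·∂ₓu = −2α·t⁻¹·u` holding for all
times `t` in the set `s` (and all `x`). -/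
def IsDustSolutionOn (α : ℝ) (s : Set ℝ) (u : ℝ → ℝ → ℝ) : Prop :=
  ∀ t ∈ s, ∀ x : ℝ,
    deriv (fun s' => u s' x) t
      + (Real.sqrt (t ^ (2 * α) * (u t x) ^ 2 + 1))⁻¹ * u t x * deriv (u t) x
      = -(2 * α) * t⁻¹ * u t x

open Set Real Filter Topology

noncomputable def dustSpeed (A y : ℝ) : ℝ := (√(A * y ^ 2 + 1))⁻¹ * y

theorem one_le_sqrt_mul_sq_add_one {A : ℝ} (hA : 0 ≤ A) (y : ℝ) : 1 ≤ √(A * y ^ 2 + 1) :=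
  Real.one_le_sqrt.2 (by nlinarith [mul_nonneg hA (sq_nonneg y)])

theorem hasDerivAt_dustSpeed {A : ℝ} (hA : 0 ≤ A) (y : ℝ) :
    HasDerivAt (dustSpeed A) ((√(A * y ^ 2 + 1))⁻¹ ^ 3) y := by
  have hq : 0 < A * y ^ 2 + 1 := by positivity
  have hs : 0 < √(A * y ^ 2 + 1) := Real.sqrt_pos.2 hq
  have h2 : √(A * y ^ 2 + 1) ^ 2 = A * y ^ 2 + 1 := Real.sq_sqrt hq.le
  refine ((((((hasDerivAt_pow 2 y).const_mul A).add_const 1).sqrt hq.ne').inv hs.ne').mul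
    (hasDerivAt_id' y)).congr_deriv ?_
  simp only [Pi.inv_apply, Nat.cast_ofNat, Nat.add_one_sub_one, pow_one]
  field_simp
  rw [h2]
  ring

theorem abs_dustSpeed_sub_le {A : ℝ} (hA : 0 ≤ A) (a b : ℝ) :
    |dustSpeed A a - dustSpeed A b| ≤ |a - b| := by
  have hbound : ∀ y, ‖(√(A * y ^ 2 + 1))⁻¹ ^ 3‖ ≤ 1 := fun y => by
    rw [norm_pow, norm_inv, Real.norm_of_nonneg (Real.sqrt_nonneg _)]
    exact pow_le_one₀ (by positivity) (inv_le_one_of_one_le₀ (one_le_sqrt_mul_sq_add_one hA y))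
  simpa using Convex.norm_image_sub_le_of_norm_hasDerivWithin_le
    (fun y _ => (hasDerivAt_dustSpeed hA y).hasDerivWithinAt) (fun y _ => hbound y)
    convex_univ (mem_univ b) (mem_univ a)

theorem mul_sub_le_dustSpeed_sub {A C a b : ℝ} (hA : 0 ≤ A) (hC : A * a ^ 2 ≤ C) (hb : 0 ≤ b)
    (hba : b ≤ a) : (√(C + 1))⁻¹ ^ 3 * (a - b) ≤ dustSpeed A a - dustSpeed A b := by
  refine (convex_Icc b a).mul_sub_le_image_sub_of_le_deriv
    (fun y _ => (hasDerivAt_dustSpeed hA y).continuousAt.continuousWithinAt)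
    (fun y _ => (hasDerivAt_dustSpeed hA y).differentiableAt.differentiableWithinAt)
    (fun y hy => ?_) b (left_mem_Icc.2 hba) a (right_mem_Icc.2 hba) hba
  rw [interior_Icc] at hy
  rw [(hasDerivAt_dustSpeed hA y).deriv]
  have hy2 : A * y ^ 2 ≤ C := le_trans (mul_le_mul_of_nonneg_left
    (pow_le_pow_left₀ (hb.trans hy.1.le) hy.2.le 2) hA) hC
  gcongr

-- The characteristic from `(1, x₀)` when the solution equals `c t^{-β}` along it.
noncomputable def dustChar (β c x₀ t : ℝ) : ℝ :=
  x₀ + ∫ s in (1 : ℝ)..t, dustSpeed (s ^ β) (c * s ^ (-β))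

section dustChar

variable {β c x₀ : ℝ}

theorem continuousOn_dustSpeed_rpow :
    ContinuousOn (fun s : ℝ => dustSpeed (s ^ β) (c * s ^ (-β))) (Ioi 0) := by
  intro s (hs : 0 < s)
  have hpow (p : ℝ) : ContinuousAt (fun s : ℝ => s ^ p) s :=
    Real.continuousAt_rpow_const _ _ (Or.inl hs.ne')
  have hsqrt : 0 < √(s ^ β * (c * s ^ (-β)) ^ 2 + 1) := Real.sqrt_pos.2 (by positivity)
  exact (((((hpow β).mul (((hpow (-β)).const_mul c).pow 2)).add_const 1).sqrt.inv₀
    hsqrt.ne').mul ((hpow (-β)).const_mul c)).continuousWithinAt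

theorem hasDerivAt_dustChar {t : ℝ} (ht : 0 < t) :
    HasDerivAt (dustChar β c x₀) (dustSpeed (t ^ β) (c * t ^ (-β))) t := by
  have hcont := continuousOn_dustSpeed_rpow (β := β) (c := c)
  have hsub : uIcc 1 t ⊆ Ioi 0 := fun s hs => (lt_min one_pos ht).trans_le hs.1
  exact (intervalIntegral.integral_hasDerivAt_right (hcont.mono hsub).intervalIntegrable
    (hcont.stronglyMeasurableAtFilter isOpen_Ioi t ht)
    (hcont.continuousAt (Ioi_mem_nhds ht))).const_add x₀

@[simp]
theorem dustChar_one : dustChar β c x₀ 1 = x₀ := by simp [dustChar]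

theorem mul_rpow_neg_le_dustSpeed_sub (hβ : 0 ≤ β) {s c₁ c₂ : ℝ} (hs : 1 ≤ s) (hc₂ : 0 ≤ c₂)
    (hc : c₂ ≤ c₁) :
    (√(c₁ ^ 2 + 1))⁻¹ ^ 3 * (c₁ - c₂) * s ^ (-β)
      ≤ dustSpeed (s ^ β) (c₁ * s ^ (-β)) - dustSpeed (s ^ β) (c₂ * s ^ (-β)) := by
  have hs₀ : 0 < s := zero_lt_one.trans_le hs
  have hneg : s ^ (-β) ≤ 1 := Real.rpow_le_one_of_one_le_of_nonpos hs (neg_nonpos.2 hβ)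
  have hamp : s ^ β * (c₁ * s ^ (-β)) ^ 2 ≤ c₁ ^ 2 := by
    have hpos : 0 < s ^ β := Real.rpow_pos_of_pos hs₀ β
    calc s ^ β * (c₁ * s ^ (-β)) ^ 2 = c₁ ^ 2 * s ^ (-β) := by
          rw [Real.rpow_neg hs₀.le]; field_simp
      _ ≤ c₁ ^ 2 := mul_le_of_le_one_right (sq_nonneg c₁) hneg
  have hrpow : 0 ≤ s ^ (-β) := Real.rpow_nonneg hs₀.le _
  convert mul_sub_le_dustSpeed_sub (Real.rpow_nonneg hs₀.le β) hamp (mul_nonneg hc₂ hrpow)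
    (mul_le_mul_of_nonneg_right hc hrpow) using 1
  ring

theorem tendsto_dustChar_sub_atTop (hβ₀ : 0 ≤ β) (hβ₁ : β < 1) {c₁ c₂ : ℝ} (hc₂ : 0 ≤ c₂)
    (hc : c₂ < c₁) (x₁ x₂ : ℝ) :
    Tendsto (fun T => dustChar β c₁ x₁ T - dustChar β c₂ x₂ T) atTop atTop := by
  set δ := (√(c₁ ^ 2 + 1))⁻¹ ^ 3 * (c₁ - c₂)
  have hδ : 0 < δ / (1 - β) := div_pos (mul_pos (by positivity) (sub_pos.2 hc)) (by linarith)
  have hint {T : ℝ} (hT : 1 ≤ T) {f : ℝ → ℝ} (hf : ContinuousOn f (Ioi 0)) :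
      IntervalIntegrable f MeasureTheory.volume 1 T :=
    (hf.mono fun s hs => (lt_min one_pos (by linarith)).trans_le hs.1).intervalIntegrable
  refine tendsto_atTop_mono' _ ?_ <| tendsto_atTop_add_const_left _ (x₁ - x₂ - δ / (1 - β)) <|
    (tendsto_rpow_atTop (sub_pos.2 hβ₁)).const_mul_atTop hδ
  filter_upwards [eventually_ge_atTop 1] with T hT
  have hpow : ∫ s in (1 : ℝ)..T, δ * s ^ (-β) = δ / (1 - β) * T ^ (1 - β) - δ / (1 - β) := by
    rw [intervalIntegral.integral_const_mul, integral_rpow (Or.inl (by linarith)),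
      Real.one_rpow, neg_add_eq_sub]
    ring
  have hmono : ∫ s in (1 : ℝ)..T, δ * s ^ (-β) ≤ ∫ s in (1 : ℝ)..T,
      (dustSpeed (s ^ β) (c₁ * s ^ (-β)) - dustSpeed (s ^ β) (c₂ * s ^ (-β))) :=
    intervalIntegral.integral_mono_on hT
      (hint hT fun s hs => ((Real.continuousAt_rpow_const _ _
        (Or.inl (ne_of_gt hs))).const_mul δ).continuousWithinAt)
      ((hint hT continuousOn_dustSpeed_rpow).sub (hint hT continuousOn_dustSpeed_rpow))
      fun s hs => mul_rpow_neg_le_dustSpeed_sub hβ₀ hs.1 hc₂ hc.le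
  rw [intervalIntegral.integral_sub (hint hT continuousOn_dustSpeed_rpow)
    (hint hT continuousOn_dustSpeed_rpow)] at hmono
  simp only [dustChar]
  linarith

theorem exists_dustChar_eq (hβ₀ : 0 ≤ β) (hβ₁ : β < 1) {c₁ c₂ x₁ x₂ : ℝ} (hc₂ : 0 ≤ c₂)
    (hc : c₂ < c₁) (hx : x₁ < x₂) :
    ∃ T, 1 ≤ T ∧ dustChar β c₁ x₁ T = dustChar β c₂ x₂ T := by
  obtain ⟨T, hT, hpos⟩ := ((eventually_ge_atTop 1).and
    ((tendsto_dustChar_sub_atTop hβ₀ hβ₁ hc₂ hc x₁ x₂).eventually_gt_atTop 0)).exists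
  have hcont : ContinuousOn (fun t => dustChar β c₁ x₁ t - dustChar β c₂ x₂ t) (Icc 1 T) :=
    fun t ht => ((hasDerivAt_dustChar (zero_lt_one.trans_le ht.1)).sub
      (hasDerivAt_dustChar (zero_lt_one.trans_le ht.1))).continuousAt.continuousWithinAt
  obtain ⟨t, ht, hzero⟩ := intermediate_value_Icc hT hcont
    ⟨by simpa using hx.le, hpos.le⟩
  exact ⟨t, ht.1, sub_eq_zero.1 hzero⟩

end dustChar

-- Unlike `eq_zero_of_abs_deriv_le_mul_abs_self_of_eq_zero_right`, no derivative at `a` is needed: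
-- the dust equation says nothing at the initial time.
theorem eq_zero_of_norm_deriv_le_mul_norm_of_eq_zero_left {E : Type*} [NormedAddCommGroup E]
    [NormedSpace ℝ E] {f f' : ℝ → E} {K a b : ℝ} (hab : a ≤ b) (hf : ContinuousOn f (Icc a b))
    (hf' : ∀ t ∈ Ioo a b, HasDerivAt f (f' t) t) (bound : ∀ t ∈ Ioo a b, ‖f' t‖ ≤ K * ‖f t‖)
    (ha : f a = 0) : f b = 0 := by
  rcases hab.eq_or_lt with rfl | hab
  · exact ha
  have hgron : ∀ t₀ ∈ Ioo a b, ‖f b‖ ≤ ‖f t₀‖ * exp (K * (b - t₀)) := fun t₀ ht₀ => by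
    have hsub : Ico t₀ b ⊆ Ioo a b := fun t ht => ⟨ht₀.1.trans_le ht.1, ht.2⟩
    rw [← gronwallBound_ε0]
    exact norm_le_gronwallBound_of_norm_deriv_right_le (hf.mono (Icc_subset_Icc ht₀.1.le le_rfl))
      (fun t ht => (hf' t (hsub ht)).hasDerivWithinAt) le_rfl
      (fun t ht => (add_zero (K * ‖f t‖)).symm ▸ bound t (hsub ht)) b ⟨ht₀.2.le, le_rfl⟩
  have hf_a : Tendsto f (𝓝[>] a) (𝓝 0) :=
    ha ▸ (hf a ⟨le_rfl, hab.le⟩).mono_of_mem_nhdsWithin (Icc_mem_nhdsGT hab)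
  have hlim : Tendsto (fun t₀ => ‖f t₀‖ * exp (K * (b - t₀))) (𝓝[>] a) (𝓝 0) := by
    simpa using hf_a.norm.mul (((by fun_prop : Continuous fun t₀ => exp (K * (b - t₀))).tendsto
      a).mono_left nhdsWithin_le_nhds)
  refine norm_le_zero_iff.1 (ge_of_tendsto hlim ?_)
  filter_upwards [Ioo_mem_nhdsGT hab] with t ht using hgron t ht

section partialDerivatives

variable {u : ℝ → ℝ → ℝ} {L : ℝ × ℝ →L[ℝ] ℝ} {t x : ℝ}

theorem HasFDerivAt.hasDerivAt_partial_fst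
    (hu : HasFDerivAt (fun p : ℝ × ℝ => u p.1 p.2) L (t, x)) :
    HasDerivAt (fun s => u s x) (L (1, 0)) t := by
  have hcurve : HasDerivAt (fun s : ℝ => (s, x)) (1, 0) t :=
    (hasDerivAt_id t).prodMk (hasDerivAt_const t x)
  exact hu.comp_hasDerivAt t hcurve

theorem HasFDerivAt.hasDerivAt_partial_snd
    (hu : HasFDerivAt (fun p : ℝ × ℝ => u p.1 p.2) L (t, x)) :
    HasDerivAt (u t) (L (0, 1)) x := by
  have hcurve : HasDerivAt (fun y : ℝ => (t, y)) (0, 1) x :=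
    (hasDerivAt_const x t).prodMk (hasDerivAt_id x)
  exact hu.comp_hasDerivAt x hcurve

theorem hasDerivAt_comp_graph {γ : ℝ → ℝ} {γ' : ℝ}
    (hu : DifferentiableAt ℝ (fun p : ℝ × ℝ => u p.1 p.2) (t, γ t)) (hγ : HasDerivAt γ γ' t) :
    HasDerivAt (fun s => u s (γ s)) (deriv (fun s => u s (γ t)) t + γ' * deriv (u t) (γ t)) t := by
  have hL := hu.hasFDerivAt
  rw [hL.hasDerivAt_partial_fst.deriv, hL.hasDerivAt_partial_snd.deriv, ← smul_eq_mul,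
    ← map_smul, ← map_add]
  have hcurve : HasDerivAt (fun s : ℝ => (s, γ s)) ((1, 0) + γ' • (0, 1)) t := by
    simpa using (hasDerivAt_id t).prodMk hγ
  exact hL.comp_hasDerivAt t hcurve

end partialDerivatives

theorem ContDiffOn.exists_abs_deriv_le {u : ℝ → ℝ → ℝ} {a T : ℝ}
    (hu : ContDiffOn ℝ 1 (fun p : ℝ × ℝ => u p.1 p.2) (Ici a ×ˢ univ)) {γ : ℝ → ℝ}
    (hγ : ContinuousOn γ (Icc a T)) : ∃ M, ∀ t ∈ Ioc a T, |deriv (u t) (γ t)| ≤ M := by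
  have hcont : ContinuousOn (fun t => fderivWithin ℝ (fun p : ℝ × ℝ => u p.1 p.2)
      (Ici a ×ˢ univ) (t, γ t) (0, 1)) (Icc a T) :=
    ((hu.continuousOn_fderivWithin ((uniqueDiffOn_Ici a).prod uniqueDiffOn_univ) le_rfl).comp
      (continuousOn_id.prodMk hγ) fun t ht => ⟨ht.1, trivial⟩).clm_apply continuousOn_const
  obtain ⟨M, hM⟩ := isCompact_Icc.exists_bound_of_continuousOn hcont
  refine ⟨M, fun t ht => ?_⟩
  have hnhds : Ici a ×ˢ univ ∈ 𝓝 (t, γ t) := prod_mem_nhds (Ici_mem_nhds ht.1) univ_mem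
  have hdiff := (hu.differentiableOn one_ne_zero).differentiableAt hnhds
  rw [hdiff.hasFDerivAt.hasDerivAt_partial_snd.deriv, ← fderivWithin_of_mem_nhds hnhds]
  exact hM t (Ioc_subset_Icc_self ht)

theorem IsDustSolutionOn.hasDerivAt_sub_along_dustChar {α : ℝ} {u : ℝ → ℝ → ℝ}
    (hpde : IsDustSolutionOn α (Ioi 1) u) {c x₀ t : ℝ} (ht : 1 < t)
    (hu : DifferentiableAt ℝ (fun p : ℝ × ℝ => u p.1 p.2) (t, dustChar (2 * α) c x₀ t)) :
    HasDerivAt (fun s => u s (dustChar (2 * α) c x₀ s) - c * s ^ (-(2 * α)))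
      ((dustSpeed (t ^ (2 * α)) (c * t ^ (-(2 * α)))
          - dustSpeed (t ^ (2 * α)) (u t (dustChar (2 * α) c x₀ t)))
        * deriv (u t) (dustChar (2 * α) c x₀ t)
        - 2 * α * t⁻¹ * (u t (dustChar (2 * α) c x₀ t) - c * t ^ (-(2 * α)))) t := by
  have ht₀ : 0 < t := zero_lt_one.trans ht
  refine ((hasDerivAt_comp_graph hu (hasDerivAt_dustChar ht₀)).sub
    ((Real.hasDerivAt_rpow_const (Or.inl ht₀.ne')).const_mul c)).congr_deriv ?_
  rw [Real.rpow_sub_one ht₀.ne']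
  have := hpde t ht (dustChar (2 * α) c x₀ t)
  simp only [dustSpeed]
  linear_combination this

theorem IsDustSolutionOn.apply_dustChar {α : ℝ} {u : ℝ → ℝ → ℝ}
    (hpde : IsDustSolutionOn α (Ioi 1) u)
    (hu : ContDiffOn ℝ 1 (fun p : ℝ × ℝ => u p.1 p.2) (Ici 1 ×ˢ univ)) {c x₀ T : ℝ}
    (h₀ : u 1 x₀ = c) (hT : 1 ≤ T) :
    u T (dustChar (2 * α) c x₀ T) = c * T ^ (-(2 * α)) := by
  set φ := dustChar (2 * α) c x₀
  have hφ : ContinuousOn φ (Icc 1 T) := fun t ht =>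
    (hasDerivAt_dustChar (zero_lt_one.trans_le ht.1)).continuousAt.continuousWithinAt
  have hdiff {t : ℝ} (ht : 1 < t) :
      DifferentiableAt ℝ (fun p : ℝ × ℝ => u p.1 p.2) (t, φ t) :=
    (hu.differentiableOn one_ne_zero).differentiableAt
      (prod_mem_nhds (Ici_mem_nhds ht) univ_mem)
  obtain ⟨M, hM⟩ := hu.exists_abs_deriv_le hφ
  refine sub_eq_zero.1 <| eq_zero_of_norm_deriv_le_mul_norm_of_eq_zero_left
    (f := fun s => u s (φ s) - c * s ^ (-(2 * α))) (K := M + |2 * α|) hT ?_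
    (fun t ht => hpde.hasDerivAt_sub_along_dustChar ht.1 (hdiff ht.1)) (fun t ht => ?_)
    (by simp [φ, h₀])
  · refine ContinuousOn.sub (hu.continuousOn.comp (continuousOn_id.prodMk hφ)
      fun t ht => ⟨ht.1, trivial⟩) fun t ht => ?_
    exact ((Real.continuousAt_rpow_const _ _
      (Or.inl (zero_lt_one.trans_le ht.1).ne')).const_mul c).continuousWithinAt
  · have ht₀ : 0 < t := zero_lt_one.trans ht.1
    have hspeed := (abs_dustSpeed_sub_le (Real.rpow_nonneg ht₀.le (2 * α))
      (c * t ^ (-(2 * α))) (u t (φ t))).trans_eq (abs_sub_comm _ _)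
    have hinv : |t⁻¹| ≤ 1 := by
      rw [abs_inv, abs_of_pos ht₀]; exact inv_le_one_of_one_le₀ ht.1.le
    simp only [Real.norm_eq_abs]
    calc _ ≤ |u t (φ t) - c * t ^ (-(2 * α))| * M
          + |2 * α| * |u t (φ t) - c * t ^ (-(2 * α))| := by
          refine (abs_sub _ _).trans (add_le_add ?_ ?_)
          · rw [abs_mul]
            exact mul_le_mul hspeed (hM t (Ioo_subset_Ioc_self ht)) (abs_nonneg _) (abs_nonneg _)
          · rw [abs_mul, abs_mul]
            exact mul_le_mul_of_nonneg_right (mul_le_of_le_one_right (abs_nonneg _) hinv)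
              (abs_nonneg _)
      _ = _ := by ring

theorem dust_instability_slow_expansion_general (α : ℝ) (hα0 : 0 < α) (hα1 : α < 1 / 2)
    (u₀ : ℝ → ℝ) (x₁ x₂ : ℝ) (hx : x₁ < x₂) (h₁ : u₀ x₂ < u₀ x₁) (h₂ : 0 < u₀ x₂) :
    ∃ lam₀ > (0:ℝ), ∀ lam : ℝ, 0 < lam → lam < lam₀ →
      ¬ ∃ u : ℝ → ℝ → ℝ,
          ContDiffOn ℝ 1 (fun p : ℝ × ℝ => u p.1 p.2) (Set.Ici 1 ×ˢ Set.univ)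
          ∧ (∀ t x, u t (x + 2 * Real.pi) = u t x)
          ∧ (∀ x, u 1 x = lam * u₀ x)
          ∧ IsDustSolutionOn α (Set.Ici 1) u := by
  -- Blow-up happens for every `λ > 0`; the choice `λ₀ = 1` is arbitrary.
  refine ⟨1, one_pos, fun lam hlam _ ⟨u, hu, _, hinit, hpde⟩ => ?_⟩
  have hpde' : IsDustSolutionOn α (Ioi 1) u := fun t ht => hpde t (mem_Ici_of_Ioi ht)
  have hspeeds : lam * u₀ x₂ < lam * u₀ x₁ := mul_lt_mul_of_pos_left h₁ hlam
  obtain ⟨T, hT, hmeet⟩ := exists_dustChar_eq (β := 2 * α) (by linarith) (by linarith)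
    (mul_pos hlam h₂).le hspeeds hx
  have hu₁ := hpde'.apply_dustChar hu (hinit x₁) hT
  have hu₂ := hpde'.apply_dustChar hu (hinit x₂) hT
  rw [hmeet, hu₂] at hu₁
  exact hspeeds.ne (mul_right_cancel₀ (Real.rpow_pos_of_pos (zero_lt_one.trans_le hT) _).ne' hu₁)

/-- Instability of the quiet dust solution for `0 < α < 1/2`: for any non-monotone profile
`u₀` as below, all sufficiently small rescalings `λ·u₀` launch solutions of the dust
equation that fail to exist globally in `C¹`. -/
theorem dust_instability_slow_expansion (α : ℝ) (hα0 : 0 < α) (hα1 : α < 1 / 2)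
    (u₀ : ℝ → ℝ) (hu₀ : ContDiff ℝ 1 u₀) (hper : ∀ x, u₀ (x + 2 * Real.pi) = u₀ x)
    (x₁ x₂ : ℝ) (hx : x₁ < x₂) (h₁ : u₀ x₂ < u₀ x₁) (h₂ : 0 < u₀ x₂) :
    ∃ lam₀ > (0:ℝ), ∀ lam : ℝ, 0 < lam → lam < lam₀ →
      ¬ ∃ u : ℝ → ℝ → ℝ,
          ContDiffOn ℝ 1 (fun p : ℝ × ℝ => u p.1 p.2) (Set.Ici 1 ×ˢ Set.univ)
          ∧ (∀ t x, u t (x + 2 * Real.pi) = u t x)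
          ∧ (∀ x, u 1 x = lam * u₀ x)
          ∧ IsDustSolutionOn α (Set.Ici 1) u :=
  dust_instability_slow_expansion_general α hα0 hα1 u₀ x₁ x₂ hx h₁ h₂
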